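/- Let λ_n be the largest eigenvalue of the n × n symmetric matrix A_n with diagonal entries 2cos(2πk/n), k = 0,...,n-1, ones on the first super- and sub-diagonals, and ones in the corners (1,n) and (n,1). Then for all sufficiently large n, λ_n < 4 - 2/n. -/

import Mathlib

/-- The n × n matrix of the operator x + x⁻¹ + y + y⁻¹ in the representation T_q of
the finite Heisenberg group: diagonal entries 2cos(2πqk/n), ones on the first super-
and sub-diagonals and in the corners (periodic tridiagonal). -/
noncomputable def heisMatrix (n q : ℕ) : Matrix (Fin n) (Fin n) ℝ :=
  Matrix.of fun i j : Fin n =>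
    if i = j then 2 * Real.cos (2 * Real.pi * q * (i : ℕ) / n)
    else if ((i : ℕ) + 1) % n = (j : ℕ) ∨ ((j : ℕ) + 1) % n = (i : ℕ) then 1
    else 0

/-!
Gershgorin's theorem applied to `diag(w)⁻¹ A diag(w)` bounds every real eigenvalue of `A` by
`max_i (A i i + ∑_{j ≠ i} |A i j| w j / w i)` for any positive weights `w`. For `A_n` take
`w i = exp (-ψ i)` with `ψ` a function of the cyclic distance `d` of `i` to `0`: `ψ = 2d²/n`
while `4d ≤ n + 2`, and `ψ` grows with slope at most `1` beyond that. Near `0` the weighted row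
sum is `2 exp (-2/n) cosh (4d/n) + 2 cos (2πd/n) ≈ 4 - 4/n - (4π² - 16) d²/n²`; further out the
diagonal entry is at most `2π/n` (and `-2` at `d = n/2`), which leaves room for the two weight
ratios, each at most `e`.
-/

open Finset Real

theorem Real.cos_le_one_sub_sq_div_two_add_pow_four (x : ℝ) :
    cos x ≤ 1 - x ^ 2 / 2 + x ^ 4 / 24 := by
  rcases le_or_gt 12 (x ^ 2) with hx | hx
  · nlinarith [cos_le_one x]
  set t := |x| / 2 with ht
  have ht0 : 0 ≤ t := by positivity
  have ht2 : t ^ 2 < 3 := by rw [ht, div_pow, sq_abs]; linarith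
  have hsin : t - t ^ 3 / 6 ≤ sin t := sin_ge_sub_cube ht0
  have hcube : 0 ≤ t - t ^ 3 / 6 := by nlinarith
  have hcos : cos x = 1 - 2 * sin t ^ 2 := by
    rw [← cos_abs, show |x| = 2 * t by rw [ht]; ring, cos_two_mul, cos_sq']
    ring
  have hx2 : x ^ 2 = 4 * t ^ 2 := by rw [ht, div_pow, sq_abs]; ring
  have hx4 : x ^ 4 = 16 * t ^ 4 := by rw [show x ^ 4 = (x ^ 2) ^ 2 by ring, hx2]; ring
  rw [hcos, hx2, hx4]
  nlinarith [mul_self_le_mul_self hcube hsin, pow_nonneg ht0 6]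

theorem Real.cos_le_of_pi_div_two_sub_le {θ δ : ℝ} (hδ : 0 ≤ δ) (hlow : π / 2 - δ ≤ θ)
    (hhigh : θ ≤ π) : cos θ ≤ δ := by
  rcases le_or_gt (π / 2) θ with h | h
  · linarith [cos_nonpos_of_pi_div_two_le_of_le h (by linarith [pi_pos])]
  · rw [← sin_pi_div_two_sub]
    linarith [sin_le (by linarith : 0 ≤ π / 2 - θ)]

theorem Real.exp_le_one_add_add_sq {x : ℝ} (hx : |x| ≤ 1) : exp x ≤ 1 + x + x ^ 2 := by
  linarith [(abs_le.mp (abs_exp_sub_one_sub_id_le hx)).2]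

theorem Real.exp_add_exp_neg_le {a : ℝ} (ha : a ^ 2 ≤ 2) :
    exp a + exp (-a) ≤ 2 + a ^ 2 + a ^ 4 / 2 := by
  have hcosh : exp a + exp (-a) ≤ 2 * exp (a ^ 2 / 2) := by
    linarith [cosh_eq a, cosh_le_exp_half_sq a]
  have hquad := exp_le_one_add_add_sq (x := a ^ 2 / 2)
    (by rw [abs_of_nonneg (by positivity)]; linarith)
  nlinarith

theorem two_cos_add_exp_add_exp_le {a h : ℝ} (ha0 : 0 ≤ a) (ha1 : a ≤ 1) (hh0 : 0 ≤ h)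
    (hh : h ≤ 1 / 7) :
    2 * cos (π / 2 * a) + exp (-h - a) + exp (-h + a) ≤ 4 - 3 / 2 * h := by
  have ha2 : a ^ 2 ≤ 1 := by nlinarith
  have ha4 : a ^ 4 ≤ a ^ 2 := by nlinarith [mul_le_mul_of_nonneg_left ha2 (sq_nonneg a)]
  have hC := exp_add_exp_neg_le (a := a) (by linarith)
  have hC2 : 2 ≤ exp a + exp (-a) := by linarith [add_one_le_exp a, add_one_le_exp (-a)]
  have hC7 : exp a + exp (-a) ≤ 7 / 2 := by linarith
  have hexp := exp_le_one_add_add_sq (x := -h) (by rw [abs_neg, abs_of_nonneg hh0]; linarith)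
  have hsplit : exp (-h - a) + exp (-h + a) = exp (-h) * (exp a + exp (-a)) := by
    rw [sub_eq_add_neg, exp_add, exp_add]; ring
  have hdamp : exp (-h) * (exp a + exp (-a)) ≤ exp a + exp (-a) - 2 * h + 7 / 2 * h ^ 2 := by
    nlinarith [mul_le_mul_of_nonneg_right hexp (by linarith : 0 ≤ exp a + exp (-a)),
      mul_le_mul_of_nonneg_left hC2 hh0, mul_le_mul_of_nonneg_left hC7 (sq_nonneg h)]
  have hcos : 2 * cos (π / 2 * a) ≤ 2 - π ^ 2 / 4 * a ^ 2 + (π ^ 2) ^ 2 / 192 * a ^ 4 := by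
    linarith [cos_le_one_sub_sq_div_two_add_pow_four (π / 2 * a)]
  have hpi2 : 9.86 ≤ π ^ 2 := by nlinarith [pi_gt_d4]
  have hpi2' : π ^ 2 ≤ 9.87 := by nlinarith [pi_lt_d4, pi_gt_d4]
  have hquartic : (π ^ 2) ^ 2 * a ^ 4 ≤ 9.87 ^ 2 * a ^ 2 := by
    have := mul_le_mul (pow_le_pow_left₀ (by positivity) hpi2' 2) ha4 (by positivity)
      (by positivity)
    linarith
  nlinarith [mul_le_mul_of_nonneg_right hpi2 (sq_nonneg a)]

theorem Matrix.le_of_mem_spectrum_of_weighted_row_le {ι : Type*} [Fintype ι] [DecidableEq ι]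
    {A : Matrix ι ι ℝ} {w : ι → ℝ} (hw : ∀ i, 0 < w i) {c μ : ℝ}
    (hrow : ∀ i, A i i + (∑ j ∈ univ.erase i, |A i j| * w j) / w i ≤ c)
    (hμ : μ ∈ spectrum ℝ A) : μ ≤ c := by
  set B : Matrix ι ι ℝ := Matrix.of fun i j => A i j * w j / w i
  have hB : Module.End.HasEigenvalue (Matrix.toLin' B) μ := by
    rw [← Matrix.spectrum_toLin', ← Module.End.hasEigenvalue_iff_mem_spectrum] at hμ
    obtain ⟨v, hv, hv0⟩ := hμ.exists_hasEigenvector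
    refine Module.End.hasEigenvalue_of_hasEigenvector (x := fun i => v i / w i) ⟨?_, ?_⟩
    · rw [Module.End.mem_eigenspace_iff, Matrix.toLin'_apply] at hv ⊢
      ext i
      have hvi : ∑ j, A i j * v j = μ * v i := congrFun hv i
      simp only [Matrix.mulVec, dotProduct, Pi.smul_apply, smul_eq_mul, B, Matrix.of_apply]
      rw [← mul_div_assoc, ← hvi, sum_div]
      refine sum_congr rfl fun j _ => ?_
      field_simp [(hw i).ne', (hw j).ne']
    · contrapose! hv0
      ext i
      simpa [(hw i).ne'] using congrFun hv0 i
  obtain ⟨i, hi⟩ := eigenvalue_mem_ball hB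
  rw [Metric.mem_closedBall, Real.dist_eq] at hi
  calc μ ≤ B i i + ∑ j ∈ univ.erase i, ‖B i j‖ := by linarith [(abs_sub_le_iff.mp hi).1]
    _ = A i i + (∑ j ∈ univ.erase i, |A i j| * w j) / w i := by
      simp only [B, Matrix.of_apply, Real.norm_eq_abs, sum_div, abs_div, abs_mul,
        abs_of_pos (hw _), mul_div_cancel_right₀ _ (hw i).ne']
    _ ≤ c := hrow i

noncomputable def rampPotential (n d : ℕ) : ℝ := ∑ j ∈ range d, min ((4 * j + 2) / n) 1

theorem rampPotential_mono (n : ℕ) : Monotone (rampPotential n) := fun _ _ h =>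
  sum_le_sum_of_subset_of_nonneg (range_subset_range.2 h) fun _ _ _ =>
    le_min (by positivity) zero_le_one

theorem rampPotential_succ_le (n d : ℕ) : rampPotential n (d + 1) ≤ rampPotential n d + 1 := by
  rw [rampPotential, rampPotential, sum_range_succ]
  exact add_le_add_right (min_le_right _ _) _

theorem rampPotential_eq_of_four_mul_le {n d : ℕ} (h : 4 * d ≤ n + 2) :
    rampPotential n d = 2 * d ^ 2 / n := by
  induction d with
  | zero => simp [rampPotential]
  | succ d ih =>
    rw [rampPotential, sum_range_succ, ← rampPotential, ih (by omega), min_eq_left]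
    · push_cast; ring
    · rw [div_le_one (by norm_cast; omega)]
      exact_mod_cast (by omega : 4 * d + 2 ≤ n)

noncomputable def cyclicPotential (n : ℕ) (i : Fin n) : ℝ :=
  rampPotential n (min (i : ℕ) (n - i))

theorem cyclicPotential_of_two_mul_le {n : ℕ} {i : Fin n} (hi : 2 * (i : ℕ) ≤ n) :
    cyclicPotential n i = rampPotential n i := by
  rw [cyclicPotential, min_eq_left (by omega)]

noncomputable def heisWeightedRowSum (n : ℕ) [NeZero n] (i : Fin n) : ℝ :=
  2 * cos (2 * π * i / n) + exp (cyclicPotential n i - cyclicPotential n (i + 1))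
    + exp (cyclicPotential n i - cyclicPotential n (i - 1))

theorem heisMatrix_apply_self {n : ℕ} (q : ℕ) (i : Fin n) :
    heisMatrix n q i i = 2 * cos (2 * π * q * i / n) := by
  simp [heisMatrix]

section

variable {n : ℕ} [NeZero n]

theorem Fin.one_ne_zero_of_two_le (hn : 2 ≤ n) : (1 : Fin n) ≠ 0 := by
  rw [Ne, Fin.ext_iff, Fin.val_one', Fin.val_zero, Nat.mod_eq_of_lt hn]
  exact one_ne_zero

theorem Fin.add_one_ne_sub_one (hn : 3 ≤ n) (i : Fin n) : i + 1 ≠ i - 1 := by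
  intro h
  have h2 : (1 : Fin n) + 1 = 0 :=
    add_left_cancel (a := i) (by rw [← add_assoc, h, sub_add_cancel, add_zero])
  rw [Fin.ext_iff, Fin.val_add, Fin.val_one', Fin.val_zero, Nat.mod_eq_of_lt (by omega : 1 < n),
    Nat.mod_eq_of_lt (by omega)] at h2
  omega

theorem heisMatrix_apply_of_ne (q : ℕ) {i j : Fin n} (hij : i ≠ j) :
    heisMatrix n q i j = if j = i + 1 ∨ j = i - 1 then 1 else 0 := by
  have hsucc : ((i : ℕ) + 1) % n = j ↔ j = i + 1 := by
    rw [eq_comm, Fin.ext_iff, Fin.val_add, Fin.val_one', Nat.add_mod_mod]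
  have hpred : ((j : ℕ) + 1) % n = i ↔ j = i - 1 := by
    rw [eq_sub_iff_add_eq, Fin.ext_iff, Fin.val_add, Fin.val_one', Nat.add_mod_mod]
  simp only [heisMatrix, Matrix.of_apply, if_neg hij, hsucc, hpred]

theorem heisMatrix_weighted_offDiag_sum (hn : 3 ≤ n) (q : ℕ) (w : Fin n → ℝ) (i : Fin n) :
    ∑ j ∈ univ.erase i, |heisMatrix n q i j| * w j = w (i + 1) + w (i - 1) := by
  have hsucc : i + 1 ≠ i := by
    rw [Ne, add_eq_left]; exact Fin.one_ne_zero_of_two_le (by omega)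
  have hpred : i - 1 ≠ i := by
    rw [Ne, sub_eq_self]; exact Fin.one_ne_zero_of_two_le (by omega)
  calc ∑ j ∈ univ.erase i, |heisMatrix n q i j| * w j
      = ∑ j ∈ univ.erase i, if j ∈ ({i + 1, i - 1} : Finset (Fin n)) then w j else 0 := by
        refine sum_congr rfl fun j hj => ?_
        simp only [heisMatrix_apply_of_ne q (ne_of_mem_erase hj).symm, mem_insert,
          mem_singleton]
        split_ifs <;> simp
    _ = w (i + 1) + w (i - 1) := by
        rw [sum_ite_mem, inter_eq_right.mpr, sum_pair (Fin.add_one_ne_sub_one hn i)]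
        simp [insert_subset_iff, hsucc, hpred]

theorem cyclicPotential_neg (i : Fin n) : cyclicPotential n (-i) = cyclicPotential n i := by
  unfold cyclicPotential
  congr 1
  rw [Fin.val_neg]
  split_ifs with h
  · simp [h]
  · omega

theorem heisWeightedRowSum_neg (i : Fin n) :
    heisWeightedRowSum n (-i) = heisWeightedRowSum n i := by
  have hcos : cos (2 * π * ((-i : Fin n) : ℕ) / n) = cos (2 * π * i / n) := by
    rw [Fin.val_neg]
    split_ifs with hi0
    · simp [hi0]
    have hn0 : (n : ℝ) ≠ 0 := by exact_mod_cast NeZero.ne n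
    rw [Nat.cast_sub i.isLt.le, ← cos_two_pi_sub]
    congr 1
    field_simp
    ring
  rw [heisWeightedRowSum, heisWeightedRowSum, show -i + 1 = -(i - 1) by abel,
    show -i - 1 = -(i + 1) by abel, cyclicPotential_neg, cyclicPotential_neg, cyclicPotential_neg,
    hcos, add_right_comm]

theorem heisWeightedRowSum_le_of_four_mul_add_two_le (hn : 14 ≤ n) {i : Fin n}
    (hi : 4 * (i : ℕ) + 2 ≤ n) : heisWeightedRowSum n i ≤ 4 - 3 / n := by
  have hnR : (14 : ℝ) ≤ n := by exact_mod_cast hn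
  have hiR : 4 * ((i : ℕ) : ℝ) + 2 ≤ n := by exact_mod_cast hi
  have hn0 : (0 : ℝ) < n := by linarith
  have hquad {j : Fin n} (hj : 4 * (j : ℕ) ≤ n + 2) :
      cyclicPotential n j = 2 * ((j : ℕ) : ℝ) ^ 2 / n := by
    rw [cyclicPotential_of_two_mul_le (by omega), rampPotential_eq_of_four_mul_le hj]
  have hnext : cyclicPotential n (i + 1) = 2 * (((i : ℕ) : ℝ) + 1) ^ 2 / n := by
    rw [hquad (by rw [Fin.val_add_one_of_lt' (by omega)]; omega),
      Fin.val_add_one_of_lt' (by omega)]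
    push_cast; ring
  have hprev : cyclicPotential n (i - 1) = 2 * (((i : ℕ) : ℝ) - 1) ^ 2 / n := by
    rcases eq_or_ne i 0 with rfl | hi0
    · have hone : ((1 : Fin n) : ℕ) = 1 := by rw [Fin.val_one', Nat.mod_eq_of_lt (by omega)]
      rw [zero_sub, cyclicPotential_neg, hquad (by omega), hone]
      simp
    · have hi1 : 1 ≤ (i : ℕ) := by
        by_contra h; exact hi0 (Fin.ext (by rw [Fin.val_zero]; omega))
      rw [hquad (by rw [Fin.val_sub_one_of_ne_zero hi0]; omega), Fin.val_sub_one_of_ne_zero hi0,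
        Nat.cast_sub hi1, Nat.cast_one]
  have key := two_cos_add_exp_add_exp_le (a := 4 * (i : ℕ) / n) (h := 2 / n) (by positivity)
    (by rw [div_le_one hn0]; linarith) (by positivity) (by rw [div_le_iff₀ hn0]; linarith)
  rw [heisWeightedRowSum, hquad (by omega), hnext, hprev]
  rw [show π / 2 * (4 * ((i : ℕ) : ℝ) / n) = 2 * π * (i : ℕ) / n by ring] at key
  convert key using 4 <;> ring

theorem heisWeightedRowSum_le_of_lt_four_mul_add_two (hn : 40 ≤ n) {i : Fin n}
    (hi : n < 4 * (i : ℕ) + 2) (hi' : 2 * (i : ℕ) ≤ n) :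
    heisWeightedRowSum n i ≤ 4 - 3 / n := by
  have hnR : (40 : ℝ) ≤ n := by exact_mod_cast hn
  have hn0 : (0 : ℝ) < n := by linarith
  set k := (i : ℕ)
  have hk1 : 1 ≤ k := by omega
  have hi0 : i ≠ 0 := by rw [Ne, Fin.ext_iff, Fin.val_zero]; omega
  have hself : cyclicPotential n i = rampPotential n k := cyclicPotential_of_two_mul_le hi'
  have hramp := rampPotential_succ_le n (k - 1)
  rw [Nat.sub_add_cancel hk1] at hramp
  have hprev : exp (cyclicPotential n i - cyclicPotential n (i - 1)) ≤ exp 1 := by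
    rw [hself, cyclicPotential_of_two_mul_le (by rw [Fin.val_sub_one_of_ne_zero hi0]; omega),
      Fin.val_sub_one_of_ne_zero hi0, exp_le_exp]
    linarith
  have hnext : cyclicPotential n (i + 1) = rampPotential n (min (k + 1) (n - (k + 1))) := by
    rw [cyclicPotential, Fin.val_add_one_of_lt' (by omega)]
  have he := exp_one_lt_d9
  have h3n : 3 / (n : ℝ) ≤ 3 / 40 := div_le_div_of_nonneg_left (by norm_num) (by norm_num) hnR
  rw [heisWeightedRowSum]
  rcases lt_or_eq_of_le hi' with hlt | heq
  · have hnext_le : exp (cyclicPotential n i - cyclicPotential n (i + 1)) ≤ 1 := by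
      rw [hself, hnext, exp_le_one_iff, sub_nonpos]
      exact rampPotential_mono n (by omega)
    have hiR : (n : ℝ) < 4 * k + 2 := by exact_mod_cast hi
    have hiR' : 2 * (k : ℝ) ≤ n := by exact_mod_cast hi'
    have hcos : cos (2 * π * k / n) ≤ π / n := by
      apply cos_le_of_pi_div_two_sub_le (by positivity)
      · rw [← sub_nonneg]
        have : 2 * π * k / n - (π / 2 - π / n) = π * (4 * k + 2 - n) / (2 * n) := by
          field_simp; ring
        rw [this]; apply div_nonneg <;> nlinarith [pi_pos]
      · rw [div_le_iff₀ hn0]; nlinarith [pi_pos]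
    have : π / n ≤ 3.1416 / 40 := div_le_div₀ (by norm_num) pi_lt_d4.le (by norm_num) hnR
    linarith
  · have hnext_le : exp (cyclicPotential n i - cyclicPotential n (i + 1)) ≤ exp 1 := by
      rw [hself, hnext, exp_le_exp, min_eq_right (by omega), show n - (k + 1) = k - 1 by omega]
      linarith
    have hcos : cos (2 * π * k / n) = -1 := by
      rw [← heq, show 2 * π * k / ((2 * k : ℕ) : ℝ) = π by push_cast; field_simp, cos_pi]
    linarith

theorem heisWeightedRowSum_le (hn : 40 ≤ n) (i : Fin n) :
    heisWeightedRowSum n i ≤ 4 - 3 / n := by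
  wlog hi : 2 * (i : ℕ) ≤ n generalizing i
  · rw [← heisWeightedRowSum_neg]
    exact this (-i) (by rw [Fin.val_neg, if_neg (by rintro rfl; simp at hi)]; omega)
  rcases le_or_gt (4 * (i : ℕ) + 2) n with hA | hB
  · exact heisWeightedRowSum_le_of_four_mul_add_two_le (by omega) hA
  · exact heisWeightedRowSum_le_of_lt_four_mul_add_two hn hB hi

theorem heisMatrix_spectrum_le (hn : 40 ≤ n) {μ : ℝ}
    (hμ : μ ∈ spectrum ℝ (heisMatrix n 1)) : μ ≤ 4 - 3 / n := by
  refine Matrix.le_of_mem_spectrum_of_weighted_row_le (w := fun i => exp (-cyclicPotential n i))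
    (fun _ => exp_pos _) (fun i => ?_) hμ
  rw [heisMatrix_weighted_offDiag_sum (by omega), heisMatrix_apply_self, Nat.cast_one, mul_one,
    add_div, ← exp_sub, ← exp_sub, neg_sub_neg, neg_sub_neg, ← add_assoc]
  exact heisWeightedRowSum_le hn i

end

theorem heisMatrix_top_eigenvalue_upper_bound :
    ∃ N : ℕ, ∀ n : ℕ, N ≤ n →
      sSup (spectrum ℝ (heisMatrix n 1)) < 4 - 2 / (n : ℝ) := by
  refine ⟨40, fun n hn => ?_⟩
  have : NeZero n := ⟨by omega⟩
  have hnR : (40 : ℝ) ≤ n := by exact_mod_cast hn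
  have h3n : 3 / (n : ℝ) ≤ 4 := by rw [div_le_iff₀ (by linarith)]; linarith
  calc sSup (spectrum ℝ (heisMatrix n 1)) ≤ 4 - 3 / n :=
        Real.sSup_le (fun μ hμ => heisMatrix_spectrum_le hn hμ) (by linarith)
    _ < 4 - 2 / n := by gcongr; norm_num
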